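/- arXiv:2511.15326 — 2 statements merged into one kernel-verified Lean document; each statement's English description precedes it below -/
import Mathlib

section
/- For every D >= 1 there exists an RNN R = Q∘K with input dimension 2, output dimension 1, and hidden state size 14 such that for all x = (x_1, x_2) ∈ [-D, D]^2 and all t ∈ ℕ₀: |(R D x)[t] - x_1·x_2| <= (D^2/2) * 4^{-t}, ‖(K D x)[t]‖_∞ <= 1, and |(R D x)[t]| <= D^2. -/
/-- ReLU applied componentwise. -/
noncomputable def relu {n : Type*} (v : n → ℝ) : n → ℝ := fun i => max 0 (v i)

/-- An RNN with input index type `ι`, hidden state index type `κ`, output index type `ω`,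
parametrized by weights `A_h, A_x, A_o, b_h, b_o`. -/
structure RNN (ι κ ω : Type) where
  Ah : Matrix κ κ ℝ
  Ax : Matrix κ ι ℝ
  Ao : Matrix ω κ ℝ
  bh : κ → ℝ
  bo : ω → ℝ

/-- Hidden state sequence `(K 𝒟 x)[t]` for the input sequence `(𝒟 x)[t] = x·1{t=0}`,
with the convention `h[-1] = 0`:  `h[0] = ρ(A_x x + b_h)`, `h[t+1] = ρ(A_h h[t] + b_h)`. -/
noncomputable def RNN.hid {ι κ ω : Type} [Fintype ι] [Fintype κ] (R : RNN ι κ ω)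
    (x : ι → ℝ) : ℕ → κ → ℝ
  | 0 => relu (R.Ax.mulVec x + R.bh)
  | t + 1 => relu (R.Ah.mulVec (RNN.hid R x t) + R.bh)

/-- Output sequence `(R 𝒟 x)[t] = A_o h[t] + b_o`. -/
noncomputable def RNN.out {ι κ ω : Type} [Fintype ι] [Fintype κ] (R : RNN ι κ ω)
    (x : ι → ℝ) (t : ℕ) : ω → ℝ :=
  R.Ao.mulVec (R.hid x t) + R.bo

/-!
Write `x₀ x₁ = D² (p² - q²)` with `p, q = (x₀ ± x₁) / (2D) ∈ [-1, 1]` and square `|p|, |q| ∈ [0, 1]`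
by Yarotsky's tent-map expansion: for the tent map `g`, `w - w² = g w / 4 + (g w - (g w)²) / 4`,
so the partial sum `z - ∑_{s=1}^{k} g^[s] z / 4^s` exceeds `z²` by
`(w - w²) / 4^k ∈ [0, 4^{-(k+1)}]`, where `w = g^[k] z`. One tent step is affine in
`g^[t] z / 4^t` and `ρ(g^[t] z - 1/2) / 4^t`, so a ReLU RNN can carry these and the partial sum
forward in time, all within `[0, 1]`.
-/

open Set

lemma max_zero_add_max_zero_neg (s : ℝ) : max 0 s + max 0 (-s) = |s| := by
  rw [max_comm, max_comm 0, max_zero_add_max_neg_zero_eq_abs_self]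

lemma max_zero_div {a c : ℝ} (hc : 0 ≤ c) : max 0 (a / c) = max 0 a / c := by
  rw [← max_div_div_right hc, zero_div]

lemma max_zero_mem_Icc {a : ℝ} (h : a ≤ 1) : max 0 a ∈ Icc 0 1 :=
  ⟨le_max_left 0 a, max_le zero_le_one h⟩

lemma div_mem_Icc_of_one_le {a c : ℝ} (ha : a ∈ Icc 0 1) (hc : 1 ≤ c) : a / c ∈ Icc 0 1 :=
  ⟨div_nonneg ha.1 (zero_le_one.trans hc), div_le_one_of_le₀ (ha.2.trans hc) (zero_le_one.trans hc)⟩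

lemma abs_div_le_one_of_abs_le {c d : ℝ} (h : |c| ≤ d) : |c / d| ≤ 1 := by
  rw [abs_div]
  exact div_le_one_of_le₀ (h.trans (le_abs_self d)) (abs_nonneg d)

lemma mul_eq_sq_sub_sq_div (a b : ℝ) {D : ℝ} (hD : D ≠ 0) :
    a * b = D ^ 2 * (((a + b) / (2 * D)) ^ 2 - ((a - b) / (2 * D)) ^ 2) := by
  field_simp
  ring

noncomputable def tent (z : ℝ) : ℝ := 2 * z - 4 * max 0 (z - 1 / 2)

lemma mapsTo_tent : MapsTo tent (Icc 0 1) (Icc 0 1) := by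
  rintro z ⟨h0, h1⟩
  unfold tent
  rcases le_total z (1 / 2) with h | h
  · rw [max_eq_left (by linarith)]; constructor <;> linarith
  · rw [max_eq_right (by linarith)]; constructor <;> linarith

lemma tent_sub_sq (z : ℝ) : tent z - tent z ^ 2 = 4 * (z - z ^ 2) - tent z := by
  unfold tent
  rcases le_total z (1 / 2) with h | h
  · rw [max_eq_left (by linarith)]; ring
  · rw [max_eq_right (by linarith)]; ring

noncomputable def sqApprox (k : ℕ) (z : ℝ) : ℝ :=
  z - ∑ s ∈ Finset.range k, tent^[s + 1] z / 4 ^ (s + 1)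

lemma sqApprox_zero (z : ℝ) : sqApprox 0 z = z := by simp [sqApprox]

lemma sqApprox_succ (k : ℕ) (z : ℝ) :
    sqApprox (k + 1) z = sqApprox k z - tent^[k + 1] z / 4 ^ (k + 1) := by
  rw [sqApprox, sqApprox, Finset.sum_range_succ, sub_add_eq_sub_sub]

lemma sqApprox_sub_sq (k : ℕ) (z : ℝ) :
    sqApprox k z - z ^ 2 = (tent^[k] z - (tent^[k] z) ^ 2) / 4 ^ k := by
  induction k with
  | zero => simp [sqApprox_zero]
  | succ k ih =>
    rw [sqApprox_succ, sub_right_comm, ih, Function.iterate_succ_apply', tent_sub_sq, pow_succ]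
    field_simp
    ring

lemma sqApprox_sub_sq_mem_Icc (k : ℕ) {z : ℝ} (hz : z ∈ Icc 0 1) :
    sqApprox k z - z ^ 2 ∈ Icc 0 (1 / 4 ^ (k + 1)) := by
  obtain ⟨h0, h1⟩ := mapsTo_tent.iterate k hz
  rw [sqApprox_sub_sq, pow_succ', ← div_div]
  constructor
  · have : 0 ≤ tent^[k] z - (tent^[k] z) ^ 2 := by nlinarith
    positivity
  · gcongr
    nlinarith [sq_nonneg (tent^[k] z - 1 / 2)]

lemma sqApprox_mem_Icc (k : ℕ) {z : ℝ} (hz : z ∈ Icc 0 1) : sqApprox k z ∈ Icc 0 1 := by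
  have hsq := (sqApprox_sub_sq_mem_Icc k hz).1
  have hsum : 0 ≤ ∑ s ∈ Finset.range k, tent^[s + 1] z / 4 ^ (s + 1) :=
    Finset.sum_nonneg fun s _ => div_nonneg (mapsTo_tent.iterate (s + 1) hz).1 (by positivity)
  constructor
  · nlinarith [sq_nonneg z]
  · unfold sqApprox; linarith [hz.2]

-- Neurons 0–4 and 5–9 are two copies of one unit, fed with `p = (x₀ + x₁) / (2D)` and
-- `q = (x₀ - x₁) / (2D)` (neurons 0, 1, 5, 6 hold `ρ(±p)`, `ρ(±q)` at `t = 0` only);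
-- neuron 10 is the clock `4^{1-t}`, neuron 11 fires only at `t = 0`, neuron 12 is the
-- constant 1 and neuron 13 is idle.
noncomputable def mulRNN (D : ℝ) : RNN (Fin 2) (Fin 14) (Fin 1) where
  Ah := Matrix.of ![
    ![0, 0, 0, 0, 0, 0, 0, 0, 0, 0, 0, 0, 0, 0],
    ![0, 0, 0, 0, 0, 0, 0, 0, 0, 0, 0, 0, 0, 0],
    ![1, 1, 1 / 2, -1, 0, 0, 0, 0, 0, 0, 0, 0, 0, 0],
    ![1, 1, 1 / 2, -1, 0, 0, 0, 0, 0, 0, -(1 / 8), -(1 / 2), 0, 0],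
    ![1, 1, -(1 / 2), 1, 1, 0, 0, 0, 0, 0, 0, 0, 0, 0],
    ![0, 0, 0, 0, 0, 0, 0, 0, 0, 0, 0, 0, 0, 0],
    ![0, 0, 0, 0, 0, 0, 0, 0, 0, 0, 0, 0, 0, 0],
    ![0, 0, 0, 0, 0, 1, 1, 1 / 2, -1, 0, 0, 0, 0, 0],
    ![0, 0, 0, 0, 0, 1, 1, 1 / 2, -1, 0, -(1 / 8), -(1 / 2), 0, 0],
    ![0, 0, 0, 0, 0, 1, 1, -(1 / 2), 1, 1, 0, 0, 0, 0],
    ![0, 0, 0, 0, 0, 0, 0, 0, 0, 0, 1 / 4, 1, 0, 0],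
    ![0, 0, 0, 0, 0, 0, 0, 0, 0, 0, 0, 0, -1, 0],
    ![0, 0, 0, 0, 0, 0, 0, 0, 0, 0, 0, 0, 0, 0],
    ![0, 0, 0, 0, 0, 0, 0, 0, 0, 0, 0, 0, 0, 0]]
  Ax := Matrix.of ![
    ![1 / (2 * D), 1 / (2 * D)],
    ![-(1 / (2 * D)), -(1 / (2 * D))],
    ![0, 0], ![0, 0], ![0, 0],
    ![1 / (2 * D), -(1 / (2 * D))],
    ![-(1 / (2 * D)), 1 / (2 * D)],
    ![0, 0], ![0, 0], ![0, 0], ![0, 0], ![0, 0], ![0, 0], ![0, 0]]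
  Ao := Matrix.of
    ![![D ^ 2, D ^ 2, -(D ^ 2 / 2), D ^ 2, D ^ 2, -D ^ 2, -D ^ 2, D ^ 2 / 2, -D ^ 2, -D ^ 2,
      0, 0, 0, 0]]
  bh := ![0, 0, 0, 0, 0, 0, 0, 0, 0, 0, 0, 1, 1, 0]
  bo := ![0]

noncomputable def mulState (p q : ℝ) : ℕ → Fin 14 → ℝ
  | 0 => ![max 0 p, max 0 (-p), 0, 0, 0, max 0 q, max 0 (-q), 0, 0, 0, 0, 1, 1, 0]
  | t + 1 =>
    ![0, 0, tent^[t] |p| / 4 ^ t, max 0 (tent^[t] |p| - 1 / 2) / 4 ^ t, sqApprox t |p|,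
      0, 0, tent^[t] |q| / 4 ^ t, max 0 (tent^[t] |q| - 1 / 2) / 4 ^ t, sqApprox t |q|,
      1 / 4 ^ t, 0, 1, 0]

lemma mulState_step_zero (D p q : ℝ) :
    relu ((mulRNN D).Ah.mulVec (mulState p q 0) + (mulRNN D).bh) = mulState p q 1 := by
  ext i
  fin_cases i <;> simp [relu, mulRNN, mulState, max_zero_add_max_zero_neg, sqApprox_zero]
  all_goals rw [← add_assoc, max_zero_add_max_zero_neg, sub_eq_add_neg]

lemma mulRNN_preact_succ (D p q : ℝ) (t : ℕ) :
    (mulRNN D).Ah.mulVec (mulState p q (t + 1)) + (mulRNN D).bh =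
      ![0, 0, tent^[t + 1] |p| / 4 ^ (t + 1), (tent^[t + 1] |p| - 1 / 2) / 4 ^ (t + 1),
        sqApprox (t + 1) |p|,
        0, 0, tent^[t + 1] |q| / 4 ^ (t + 1), (tent^[t + 1] |q| - 1 / 2) / 4 ^ (t + 1),
        sqApprox (t + 1) |q|,
        1 / 4 ^ (t + 1), 0, 1, 0] := by
  ext i
  fin_cases i <;> simp [mulRNN, mulState, sqApprox_succ, Function.iterate_succ_apply', tent]
  all_goals rw [pow_succ]; ring

lemma mulState_step_succ (D : ℝ) {p q : ℝ} (hp : |p| ≤ 1) (hq : |q| ≤ 1) (t : ℕ) :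
    relu ((mulRNN D).Ah.mulVec (mulState p q (t + 1)) + (mulRNN D).bh) = mulState p q (t + 2) := by
  rw [mulRNN_preact_succ]
  have hp' : |p| ∈ Icc 0 1 := ⟨abs_nonneg p, hp⟩
  have hq' : |q| ∈ Icc 0 1 := ⟨abs_nonneg q, hq⟩
  have h4 : (0 : ℝ) ≤ 4 ^ (t + 1) := by positivity
  ext i
  fin_cases i <;> simp [relu, mulState, -Function.iterate_succ, max_zero_div h4,
    (mapsTo_tent.iterate (t + 1) hp').1, (mapsTo_tent.iterate (t + 1) hq').1,
    (sqApprox_mem_Icc (t + 1) hp').1, (sqApprox_mem_Icc (t + 1) hq').1]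

lemma mulRNN_hid_zero (D : ℝ) (x : Fin 2 → ℝ) :
    (mulRNN D).hid x 0 = mulState ((x 0 + x 1) / (2 * D)) ((x 0 - x 1) / (2 * D)) 0 := by
  ext i
  fin_cases i <;> simp [RNN.hid, relu, mulRNN, mulState, Matrix.vecHead, Matrix.vecTail] <;>
    congr 1 <;> ring

lemma mulRNN_hid (D : ℝ) (x : Fin 2 → ℝ) (hp : |(x 0 + x 1) / (2 * D)| ≤ 1)
    (hq : |(x 0 - x 1) / (2 * D)| ≤ 1) (t : ℕ) :
    (mulRNN D).hid x t = mulState ((x 0 + x 1) / (2 * D)) ((x 0 - x 1) / (2 * D)) t := by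
  induction t with
  | zero => exact mulRNN_hid_zero D x
  | succ t ih =>
    rw [RNN.hid, ih]
    cases t with
    | zero => exact mulState_step_zero D _ _
    | succ t => exact mulState_step_succ D hp hq t

lemma mulRNN_out (D p q : ℝ) (t : ℕ) :
    ((mulRNN D).Ao.mulVec (mulState p q t) + (mulRNN D).bo) 0 =
      D ^ 2 * (sqApprox t |p| - sqApprox t |q|) := by
  cases t with
  | zero =>
    simp [mulRNN, mulState, sqApprox_zero, ← max_zero_add_max_zero_neg]
    ring
  | succ t =>
    simp [mulRNN, mulState, sqApprox_succ, Function.iterate_succ_apply', tent]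
    rw [pow_succ]
    ring

lemma mulState_mem_Icc {p q : ℝ} (hp : |p| ≤ 1) (hq : |q| ≤ 1) (t : ℕ) (i : Fin 14) :
    mulState p q t i ∈ Icc 0 1 := by
  have hp' : |p| ∈ Icc 0 1 := ⟨abs_nonneg p, hp⟩
  have hq' : |q| ∈ Icc 0 1 := ⟨abs_nonneg q, hq⟩
  cases t with
  | zero =>
    fin_cases i <;> simp only [mulState, Fin.reduceFinMk, Matrix.cons_val]
    all_goals first
      | exact unitInterval.zero_mem
      | exact unitInterval.one_mem
      | exact max_zero_mem_Icc ((le_abs_self _).trans ‹_›)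
      | exact max_zero_mem_Icc ((neg_le_abs _).trans ‹_›)
  | succ t =>
    have h4 : (1 : ℝ) ≤ 4 ^ t := one_le_pow₀ (by norm_num)
    have hpt := mapsTo_tent.iterate t hp'
    have hqt := mapsTo_tent.iterate t hq'
    fin_cases i <;> simp only [mulState, Fin.reduceFinMk, Matrix.cons_val]
    all_goals first
      | exact unitInterval.zero_mem
      | exact unitInterval.one_mem
      | exact sqApprox_mem_Icc t ‹_›
      | exact div_mem_Icc_of_one_le ‹_› h4
      | exact div_mem_Icc_of_one_le unitInterval.one_mem h4
      | exact div_mem_Icc_of_one_le (max_zero_mem_Icc (by linarith [hpt.2])) h4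
      | exact div_mem_Icc_of_one_le (max_zero_mem_Icc (by linarith [hqt.2])) h4

lemma norm_mulState_le {p q : ℝ} (hp : |p| ≤ 1) (hq : |q| ≤ 1) (t : ℕ) :
    ‖mulState p q t‖ ≤ 1 :=
  (pi_norm_le_iff_of_nonneg zero_le_one).2 fun i => by
    obtain ⟨h0, h1⟩ := mulState_mem_Icc hp hq t i
    rwa [Real.norm_of_nonneg h0]

lemma abs_sqApprox_sub_sqApprox_sub_le (t : ℕ) {a b : ℝ} (ha : a ∈ Icc 0 1) (hb : b ∈ Icc 0 1) :
    |(sqApprox t a - sqApprox t b) - (a ^ 2 - b ^ 2)| ≤ 1 / 4 ^ (t + 1) := by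
  obtain ⟨ha₀, ha₁⟩ := sqApprox_sub_sq_mem_Icc t ha
  obtain ⟨hb₀, hb₁⟩ := sqApprox_sub_sq_mem_Icc t hb
  exact abs_le.2 ⟨by linarith, by linarith⟩

/-- Theorem (multiplication RNN): for every `D ≥ 1` there is an RNN with input
dimension 2, output dimension 1, and hidden state size 14 such that for all
`x = (x₁, x₂) ∈ [−D, D]²` and all `t ∈ ℕ₀`: `|(R 𝒟 x)[t] − x₁·x₂| ≤ (D²/2)·4^{−t}`,
`‖(K 𝒟 x)[t]‖∞ ≤ 1`, and `|(R 𝒟 x)[t]| ≤ D²`. -/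
theorem stmt6 (D : ℝ) (hD : 1 ≤ D) :
    ∃ R : RNN (Fin 2) (Fin 14) (Fin 1),
      ∀ x : Fin 2 → ℝ, (∀ i, x i ∈ Set.Icc (-D) D) → ∀ t : ℕ,
        |R.out x t 0 - x 0 * x 1| ≤ D ^ 2 / 2 * (4 : ℝ) ^ (-(t : ℤ)) ∧
        ‖R.hid x t‖ ≤ 1 ∧ |R.out x t 0| ≤ D ^ 2 := by
  refine ⟨mulRNN D, fun x hx t => ?_⟩
  have hx₀ : |x 0| ≤ D := abs_le.2 (hx 0)
  have hx₁ : |x 1| ≤ D := abs_le.2 (hx 1)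
  have hmul := mul_eq_sq_sub_sq_div (x 0) (x 1) (by linarith : (0 : ℝ) < D).ne'
  set p := (x 0 + x 1) / (2 * D)
  set q := (x 0 - x 1) / (2 * D)
  rw [← sq_abs p, ← sq_abs q] at hmul
  have hp : |p| ≤ 1 := abs_div_le_one_of_abs_le ((abs_add_le _ _).trans (by linarith))
  have hq : |q| ≤ 1 := abs_div_le_one_of_abs_le ((abs_sub _ _).trans (by linarith))
  have hout : (mulRNN D).out x t 0 = D ^ 2 * (sqApprox t |p| - sqApprox t |q|) := by
    rw [RNN.out, mulRNN_hid D x hp hq, mulRNN_out]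
  have hp' : |p| ∈ Icc 0 1 := ⟨abs_nonneg p, hp⟩
  have hq' : |q| ∈ Icc 0 1 := ⟨abs_nonneg q, hq⟩
  refine ⟨?_, mulRNN_hid D x hp hq t ▸ norm_mulState_le hp hq t, ?_⟩
  · rw [hout, hmul, ← mul_sub, abs_mul, abs_of_nonneg (sq_nonneg D), zpow_neg, zpow_natCast]
    calc D ^ 2 * |sqApprox t |p| - sqApprox t |q| - (|p| ^ 2 - |q| ^ 2)|
        ≤ D ^ 2 * (1 / 4 ^ (t + 1)) := by gcongr; exact abs_sqApprox_sub_sqApprox_sub_le t hp' hq'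
      _ = D ^ 2 / 4 * (4 ^ t)⁻¹ := by rw [pow_succ]; ring
      _ ≤ D ^ 2 / 2 * (4 ^ t)⁻¹ := by gcongr; norm_num
  · obtain ⟨hp₀, hp₁⟩ := sqApprox_mem_Icc t hp'
    obtain ⟨hq₀, hq₁⟩ := sqApprox_mem_Icc t hq'
    rw [hout, abs_mul, abs_of_nonneg (sq_nonneg D)]
    exact mul_le_of_le_one_right (sq_nonneg D) (abs_sub_le_iff.2 ⟨by linarith, by linarith⟩)
end

section
/- Let D >= 1. For all x, y ∈ [-D, D]: ‖f_1(x)‖_∞ <= D² and ‖f_1(x) - f_1(y)‖_∞ <= 2D|x - y|. Moreover, for every l >= 2 and all x, y ∈ [-D^{2^{l-1}}, D^{2^{l-1}}]^{2^{l-2}+1}: ‖f_l(x)‖_∞ <= D^{2^l} and ‖f_l(x) - f_l(y)‖_∞ <= 2D^{2^{l-1}} ‖x - y‖_∞. -/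
/-- The map `f_ℓ : ℝ^{2^{ℓ−2}+1} → ℝ^{2^{ℓ−1}+1}` (for `ℓ ≥ 2`), written with 0-based
indices: with `x_1, …, x_{2^{ℓ−2}+1}` the (1-based) coordinates of the input,
`f_ℓ(x)_1 = x_{2^{ℓ−2}} x_{2^{ℓ−2}+1}`, `f_ℓ(x)_{2k} = x_k²` for `k ∈ {1,…,2^{ℓ−2}}`,
`f_ℓ(x)_{2k+1} = x_k x_{k+1}` for `k ∈ {1,…,2^{ℓ−2}−1}`, and
`f_ℓ(x)_{2^{ℓ−1}+1} = x_{2^{ℓ−2}+1}`.  (Out-of-range accesses, which do not occur for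
`ℓ ≥ 2`, default to `0`.) -/
noncomputable def fPoly (l : ℕ) (x : Fin (2 ^ (l - 2) + 1) → ℝ)
    (i : Fin (2 ^ (l - 1) + 1)) : ℝ :=
  let x' : ℕ → ℝ := fun j => if h : j < 2 ^ (l - 2) + 1 then x ⟨j, h⟩ else 0
  if (i : ℕ) = 0 then x' (2 ^ (l - 2) - 1) * x' (2 ^ (l - 2))
  else if (i : ℕ) = 2 ^ (l - 1) then x' (2 ^ (l - 2))
  else if (i : ℕ) % 2 = 1 then (x' (((i : ℕ) + 1) / 2 - 1)) ^ 2
  else x' ((i : ℕ) / 2 - 1) * x' ((i : ℕ) / 2)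

/-- The map `f_1 : ℝ → ℝ²`, `f_1(x) = (x², x)`. -/
noncomputable def f1 (x : ℝ) : Fin 2 → ℝ := ![x ^ 2, x]

/-- `F_ℓ = f_ℓ ∘ ⋯ ∘ f_1 : ℝ → ℝ^{2^{ℓ−1}+1}` (for `ℓ ≥ 1`; the value at `ℓ = 0` is
irrelevant junk). -/
noncomputable def FPoly : (l : ℕ) → ℝ → Fin (2 ^ (l - 1) + 1) → ℝ
  | 0 => fun x _ => x
  | 1 => f1
  | l + 2 => fun x => fPoly (l + 2) (FPoly (l + 1) x)

/-! Every coordinate of `f_ℓ` (and of `f_1`) is either a product of two input coordinates or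
an input coordinate. With all inputs bounded by `M ≥ 1`, the former are bounded by `M²`, and
`ab - cd = a (b - d) + d (a - c)` makes them `2M`-Lipschitz; the latter are bounded by `M ≤ M²`
and `1`-Lipschitz. For `f_ℓ` take `M = D^{2^{ℓ-1}}`, so that `M² = D^{2^ℓ}`. -/

section Bounds

variable {M e a b c d : ℝ}

lemma abs_mul_le_sq (ha : |a| ≤ M) (hb : |b| ≤ M) : |a * b| ≤ M ^ 2 := by
  rw [abs_mul, sq]
  exact mul_le_mul ha hb (abs_nonneg b) ((abs_nonneg a).trans ha)

lemma abs_le_sq_of_abs_le (hM : 1 ≤ M) (ha : |a| ≤ M) : |a| ≤ M ^ 2 :=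
  ha.trans (le_self_pow₀ hM two_ne_zero)

lemma abs_mul_sub_mul_le (ha : |a| ≤ M) (hd : |d| ≤ M) (hac : |a - c| ≤ e)
    (hbd : |b - d| ≤ e) : |a * b - c * d| ≤ 2 * M * e := by
  have he : 0 ≤ e := (abs_nonneg _).trans hac
  have hM : 0 ≤ M := (abs_nonneg _).trans ha
  calc |a * b - c * d| = |a * (b - d) + d * (a - c)| := by congr 1; ring
    _ ≤ |a| * |b - d| + |d| * |a - c| := by
      rw [← abs_mul, ← abs_mul]
      exact abs_add_le _ _
    _ ≤ M * e + M * e := by gcongr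
    _ = 2 * M * e := by ring

lemma abs_sub_le_two_mul (hM : 1 ≤ M) (h : |a - c| ≤ e) : |a - c| ≤ 2 * M * e := by
  have he : 0 ≤ e := (abs_nonneg _).trans h
  nlinarith

end Bounds

section F1

variable {D x y : ℝ}

theorem norm_f1_le (hD : 1 ≤ D) (hx : |x| ≤ D) : ‖f1 x‖ ≤ D ^ 2 := by
  refine (pi_norm_le_iff_of_nonneg (by positivity)).2 fun i => ?_
  fin_cases i
  · simpa [f1, sq] using abs_mul_le_sq hx hx
  · simpa [f1] using abs_le_sq_of_abs_le hD hx

theorem norm_f1_sub_le (hD : 1 ≤ D) (hx : |x| ≤ D) (hy : |y| ≤ D) :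
    ‖f1 x - f1 y‖ ≤ 2 * D * |x - y| := by
  refine (pi_norm_le_iff_of_nonneg (by positivity)).2 fun i => ?_
  fin_cases i
  · simpa [f1, sq] using abs_mul_sub_mul_le hx hy le_rfl le_rfl
  · simpa [f1] using abs_sub_le_two_mul hD le_rfl

end F1

section FPoly

/-- This is definitionally the `x'` in the definition of `fPoly`. -/
def padZero {n : ℕ} (x : Fin n → ℝ) (j : ℕ) : ℝ :=
  if h : j < n then x ⟨j, h⟩ else 0

variable {n : ℕ} {M : ℝ} {x y : Fin n → ℝ}

lemma abs_padZero_le (hM : 0 ≤ M) (hx : ∀ i, |x i| ≤ M) (j : ℕ) : |padZero x j| ≤ M := by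
  unfold padZero
  split_ifs
  · exact hx _
  · simpa using hM

lemma abs_padZero_sub_le (x y : Fin n → ℝ) (j : ℕ) :
    |padZero x j - padZero y j| ≤ ‖x - y‖ := by
  unfold padZero
  split_ifs with h
  · exact norm_le_pi_norm (x - y) ⟨j, h⟩
  · simp

lemma fPoly_apply_eq_mul_or_eq (l : ℕ) (i : Fin (2 ^ (l - 1) + 1)) :
    (∃ j k, ∀ x, fPoly l x i = padZero x j * padZero x k) ∨
      ∃ j, ∀ x, fPoly l x i = padZero x j := by
  unfold fPoly
  split_ifs
  · exact .inl ⟨_, _, fun _ => rfl⟩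
  · exact .inr ⟨_, fun _ => rfl⟩
  · exact .inl ⟨_, _, fun _ => sq _⟩
  · exact .inl ⟨_, _, fun _ => rfl⟩

variable {l : ℕ} {x y : Fin (2 ^ (l - 2) + 1) → ℝ}

theorem norm_fPoly_le (hM : 1 ≤ M) (hx : ∀ i, |x i| ≤ M) : ‖fPoly l x‖ ≤ M ^ 2 := by
  refine (pi_norm_le_iff_of_nonneg (by positivity)).2 fun i => ?_
  have hpad := abs_padZero_le (zero_le_one.trans hM) hx
  rw [Real.norm_eq_abs]
  rcases fPoly_apply_eq_mul_or_eq l i with ⟨j, k, h⟩ | ⟨j, h⟩ <;> rw [h]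
  · exact abs_mul_le_sq (hpad j) (hpad k)
  · exact abs_le_sq_of_abs_le hM (hpad j)

theorem norm_fPoly_sub_le (hM : 1 ≤ M) (hx : ∀ i, |x i| ≤ M) (hy : ∀ i, |y i| ≤ M) :
    ‖fPoly l x - fPoly l y‖ ≤ 2 * M * ‖x - y‖ := by
  refine (pi_norm_le_iff_of_nonneg (by positivity)).2 fun i => ?_
  have hxpad := abs_padZero_le (zero_le_one.trans hM) hx
  have hypad := abs_padZero_le (zero_le_one.trans hM) hy
  have hdiff := abs_padZero_sub_le x y
  rw [Pi.sub_apply, Real.norm_eq_abs]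
  rcases fPoly_apply_eq_mul_or_eq l i with ⟨j, k, h⟩ | ⟨j, h⟩ <;> rw [h, h]
  · exact abs_mul_sub_mul_le (hxpad j) (hypad k) (hdiff j) (hdiff k)
  · exact abs_sub_le_two_mul hM (hdiff j)

end FPoly

/-- Lemma: for `D ≥ 1`: `‖f_1(x)‖∞ ≤ D²` and `‖f_1(x) − f_1(y)‖∞ ≤ 2D|x − y|` for all
`x, y ∈ [−D, D]`; and for every `ℓ ≥ 2` and all
`x, y ∈ [−D^{2^{ℓ−1}}, D^{2^{ℓ−1}}]^{2^{ℓ−2}+1}`: `‖f_ℓ(x)‖∞ ≤ D^{2^ℓ}` and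
`‖f_ℓ(x) − f_ℓ(y)‖∞ ≤ 2 D^{2^{ℓ−1}} ‖x − y‖∞`. -/
theorem stmt13 (D : ℝ) (hD : 1 ≤ D) :
    (∀ x ∈ Set.Icc (-D) D, ‖f1 x‖ ≤ D ^ 2) ∧
    (∀ x ∈ Set.Icc (-D) D, ∀ y ∈ Set.Icc (-D) D, ‖f1 x - f1 y‖ ≤ 2 * D * |x - y|) ∧
    (∀ l : ℕ, 2 ≤ l → ∀ x y : Fin (2 ^ (l - 2) + 1) → ℝ,
      (∀ i, x i ∈ Set.Icc (-(D ^ (2 ^ (l - 1)))) (D ^ (2 ^ (l - 1)))) →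
      (∀ i, y i ∈ Set.Icc (-(D ^ (2 ^ (l - 1)))) (D ^ (2 ^ (l - 1)))) →
      ‖fPoly l x‖ ≤ D ^ (2 ^ l) ∧
      ‖fPoly l x - fPoly l y‖ ≤ 2 * D ^ (2 ^ (l - 1)) * ‖x - y‖) := by
  refine ⟨fun x hx => norm_f1_le hD (abs_le.2 hx),
    fun x hx y hy => norm_f1_sub_le hD (abs_le.2 hx) (abs_le.2 hy), fun l hl x y hx hy => ?_⟩
  have hM : 1 ≤ D ^ 2 ^ (l - 1) := one_le_pow₀ hD
  have hsq : D ^ 2 ^ l = (D ^ 2 ^ (l - 1)) ^ 2 := by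
    rw [← pow_mul, ← pow_succ, Nat.sub_add_cancel (by omega)]
  rw [hsq]
  exact ⟨norm_fPoly_le hM fun i => abs_le.2 (hx i),
    norm_fPoly_sub_le hM (fun i => abs_le.2 (hx i)) fun i => abs_le.2 (hy i)⟩
end
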